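/- arXiv:1201.5867 — 2 statements merged into one kernel-verified Lean document; each statement's English description precedes it below -/
import Mathlib

section
/- With $\phi$ as above (Laplace exponent with poles at $\{\rho_n\}$ and $\{-\hat\rho_n\}$) and $q > 0$: for every $n \ge 1$ there exists a solution $\zeta_{n+1}$ of $\phi(z) = q$ in the open interval $(\rho_n, \rho_{n+1})$, and a solution $\hat\zeta_{n+1}$ in $(-\hat\rho_{n+1}, -\hat\rho_n)$; together with the solutions $\zeta_1\in(0,\rho_1)$ and $-\hat\zeta_1\in(-\hat\rho_1,0)$ this yields real zeros interlacing with the poles: $0 < \zeta_1 < \rho_1 < \zeta_2 < \rho_2 < \cdots$ and $0 < \hat\zeta_1 < \hat\rho_1 < \hat\zeta_2 < \hat\rho_2 < \cdots$. -/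
/-!
For `ρ k ≥ 2|z|` the `k`-th term of the pole series is bounded by `2 |a k| / ρ k ^ 2`, so after
removing finitely many terms the series converges uniformly on bounded sets. Hence `φ` is
continuous between consecutive poles, and the simple pole at `ρ n`, with positive residue,
sends `φ` to `+∞` as `z ↑ ρ n` and to `-∞` as `z ↓ ρ n`. Together with `φ 0 = 0 < q`, the
intermediate value theorem gives a root in `(0, ρ 0)` and in every `(ρ n, ρ (n + 1))`. The
negative roots are the positive roots of `z ↦ φ (-z)`, which has the same shape with the two
pole sequences exchanged.
-/

open Filter Set Topology

noncomputable def poleTerm (a ρ : ℕ → ℝ) (k : ℕ) (z : ℝ) : ℝ :=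
  a k / (ρ k * (ρ k - z))

/-- At a pole `z = ρ k` the term takes the junk value `0`, so the series is summable for
every `z`. -/
noncomputable def poleSeries (a ρ : ℕ → ℝ) (z : ℝ) : ℝ :=
  ∑' k, poleTerm a ρ k z

structure AdmissiblePoles (a ρ : ℕ → ℝ) : Prop where
  pos : ∀ k, 0 < ρ k
  tendsto_atTop : Tendsto ρ atTop atTop
  summable : Summable fun k => a k / ρ k ^ 2

namespace poleSeries

variable {a ρ : ℕ → ℝ}

lemma norm_poleTerm_le {R z : ℝ} {k : ℕ} (hR : 0 < R) (hz : |z| ≤ R) (hk : 2 * R ≤ ρ k) :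
    ‖poleTerm a ρ k z‖ ≤ 2 * ‖a k / ρ k ^ 2‖ := by
  have hρk : 0 < ρ k := by linarith
  have hgap : ρ k / 2 ≤ ρ k - z := by linarith [le_abs_self z]
  calc ‖poleTerm a ρ k z‖ = |a k| / (ρ k * (ρ k - z)) := by
        rw [poleTerm, Real.norm_eq_abs, abs_div, abs_of_pos (mul_pos hρk (by linarith))]
    _ ≤ |a k| / (ρ k * (ρ k / 2)) := by gcongr
    _ = 2 * ‖a k / ρ k ^ 2‖ := by
        rw [Real.norm_eq_abs, abs_div, abs_of_pos (pow_pos hρk 2)]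
        ring

lemma continuousAt_poleTerm {k : ℕ} {z₀ : ℝ} (hρk : ρ k ≠ 0) (hz₀ : ρ k ≠ z₀) :
    ContinuousAt (poleTerm a ρ k) z₀ :=
  continuousAt_const.div (by fun_prop) (mul_ne_zero hρk (sub_ne_zero.2 hz₀))

lemma continuousOn_tail (hρ : ∀ k, 0 < ρ k) (hsum : Summable fun k => a k / ρ k ^ 2)
    {R : ℝ} {N : ℕ} (hR : 0 < R) (hN : ∀ k ≥ N, 2 * R ≤ ρ k) :
    ContinuousOn (fun z => ∑' k, poleTerm a ρ (k + N) z) (Icc (-R) R) := by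
  refine continuousOn_tsum (fun k z hz => ?_)
    (((summable_nat_add_iff N).2 hsum.norm).mul_left 2)
    (fun k z hz => norm_poleTerm_le hR (abs_le.2 hz) (hN _ (by omega)))
  refine (continuousAt_poleTerm (hρ _).ne' (ne_of_gt ?_)).continuousWithinAt
  linarith [hN (k + N) (by omega), hz.2]

lemma summable (hlim : Tendsto ρ atTop atTop) (hsum : Summable fun k => a k / ρ k ^ 2)
    (z : ℝ) : Summable fun k => poleTerm a ρ k z := by
  obtain ⟨N, hN⟩ :=
    (eventually_forall_ge_atTop.2 (hlim.eventually_ge_atTop (2 * (|z| + 1)))).exists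
  refine (summable_nat_add_iff N).1 (Summable.of_norm_bounded
    (((summable_nat_add_iff N).2 hsum.norm).mul_left 2) fun k => ?_)
  exact norm_poleTerm_le (by positivity) (by linarith) (hN _ (by omega))

lemma eq_sum_add_tail (hlim : Tendsto ρ atTop atTop) (hsum : Summable fun k => a k / ρ k ^ 2)
    (N : ℕ) (z : ℝ) :
    poleSeries a ρ z =
      ∑ k ∈ Finset.range N, poleTerm a ρ k z + ∑' k, poleTerm a ρ (k + N) z :=
  ((summable hlim hsum z).sum_add_tsum_nat_add N).symm

lemma eventually_continuousAt_tail (h : AdmissiblePoles a ρ) (z₀ : ℝ) :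
    ∀ᶠ N in atTop, ContinuousAt (fun z => ∑' k, poleTerm a ρ (k + N) z) z₀ := by
  filter_upwards
    [eventually_forall_ge_atTop.2 (h.tendsto_atTop.eventually_ge_atTop (2 * (|z₀| + 1)))]
    with N hN
  refine (continuousOn_tail h.pos h.summable (by positivity) hN).continuousAt
    (Icc_mem_nhds ?_ ?_)
  · linarith [neg_abs_le z₀]
  · linarith [le_abs_self z₀]

lemma continuousAt_finset_sum (hρ : ∀ k, 0 < ρ k) {s : Finset ℕ} {z₀ : ℝ}
    (hs : ∀ k ∈ s, ρ k ≠ z₀) :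
    ContinuousAt (fun z => ∑ k ∈ s, poleTerm a ρ k z) z₀ :=
  tendsto_finsetSum s fun k hk => continuousAt_poleTerm (hρ k).ne' (hs k hk)

lemma continuousAt (h : AdmissiblePoles a ρ) {z₀ : ℝ} (hz₀ : z₀ ∉ range ρ) :
    ContinuousAt (poleSeries a ρ) z₀ := by
  obtain ⟨N, hN⟩ := (eventually_continuousAt_tail h z₀).exists
  rw [funext (eq_sum_add_tail h.tendsto_atTop h.summable N)]
  exact (continuousAt_finset_sum h.pos fun k _ hk => hz₀ ⟨k, hk⟩).add hN

lemma continuousAt_sub_poleTerm (h : AdmissiblePoles a ρ) (hmono : StrictMono ρ) (m : ℕ) :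
    ContinuousAt (fun z => poleSeries a ρ z - poleTerm a ρ m z) (ρ m) := by
  obtain ⟨N, hN, hmN⟩ :=
    ((eventually_continuousAt_tail h (ρ m)).and (eventually_gt_atTop m)).exists
  have hsplit : ∀ z, poleSeries a ρ z - poleTerm a ρ m z =
      ∑ k ∈ (Finset.range N).erase m, poleTerm a ρ k z + ∑' k, poleTerm a ρ (k + N) z :=
    fun z => by
      rw [eq_sum_add_tail h.tendsto_atTop h.summable N,
        ← Finset.add_sum_erase _ _ (Finset.mem_range.2 hmN)]
      ring
  rw [funext hsplit]
  exact (continuousAt_finset_sum h.pos fun k hk hkm =>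
    Finset.ne_of_mem_erase hk (hmono.injective hkm)).add hN

lemma continuousAt_comp_neg (h : AdmissiblePoles a ρ) {z : ℝ} (hz : 0 ≤ z) :
    ContinuousAt (fun w => poleSeries a ρ (-w)) z := by
  refine ContinuousAt.comp (g := poleSeries a ρ) (continuousAt h ?_) continuousAt_neg
  rintro ⟨k, hk⟩
  linarith [h.pos k]

end poleSeries

lemma tendsto_div_mul_sub_nhdsLT {c r : ℝ} (hc : 0 < c) (hr : 0 < r) :
    Tendsto (fun z => c / (r * (r - z))) (𝓝[<] r) atTop := by
  have h : Tendsto (fun z => r - z) (𝓝[<] r) (𝓝[>] 0) := by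
    refine tendsto_nhdsWithin_iff.2
      ⟨?_, eventually_nhdsWithin_of_forall fun z hz => mem_Ioi.2 (sub_pos.2 hz)⟩
    exact tendsto_nhdsWithin_of_tendsto_nhds (by simpa using (continuous_sub_left r).tendsto r)
  refine (h.inv_tendsto_nhdsGT_zero.const_mul_atTop (div_pos hc hr)).congr fun z => ?_
  simp only [Pi.inv_apply, div_eq_mul_inv, mul_inv, mul_assoc]

lemma tendsto_div_mul_sub_nhdsGT {c r : ℝ} (hc : 0 < c) (hr : 0 < r) :
    Tendsto (fun z => c / (r * (r - z))) (𝓝[>] r) atBot := by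
  have h : Tendsto (fun z => r - z) (𝓝[>] r) (𝓝[<] 0) := by
    refine tendsto_nhdsWithin_iff.2
      ⟨?_, eventually_nhdsWithin_of_forall fun z hz => mem_Iio.2 (sub_neg.2 hz)⟩
    exact tendsto_nhdsWithin_of_tendsto_nhds (by simpa using (continuous_sub_left r).tendsto r)
  refine (h.inv_tendsto_nhdsLT_zero.const_mul_atBot (div_pos hc hr)).congr fun z => ?_
  simp only [Pi.inv_apply, div_eq_mul_inv, mul_inv, mul_assoc]

noncomputable def laplaceExponent (σ μ : ℝ) (a ρ ahat ρhat : ℕ → ℝ) (z : ℝ) : ℝ :=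
  σ ^ 2 * z ^ 2 / 2 + μ * z + z ^ 2 * poleSeries a ρ z + z ^ 2 * poleSeries ahat ρhat (-z)

namespace laplaceExponent

variable {σ μ : ℝ} {a ρ ahat ρhat : ℕ → ℝ}

lemma neg (z : ℝ) :
    laplaceExponent σ μ a ρ ahat ρhat (-z) = laplaceExponent σ (-μ) ahat ρhat a ρ z := by
  simp only [laplaceExponent, neg_neg]
  ring

lemma zero : laplaceExponent σ μ a ρ ahat ρhat 0 = 0 := by
  simp [laplaceExponent]

lemma continuousAt (h : AdmissiblePoles a ρ) (hhat : AdmissiblePoles ahat ρhat) {z : ℝ}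
    (hz₀ : 0 ≤ z) (hz : z ∉ range ρ) :
    ContinuousAt (laplaceExponent σ μ a ρ ahat ρhat) z := by
  have hS := poleSeries.continuousAt h hz
  have hT := poleSeries.continuousAt_comp_neg hhat hz₀
  unfold laplaceExponent
  fun_prop

lemma continuousAt_sub_pole (h : AdmissiblePoles a ρ) (hhat : AdmissiblePoles ahat ρhat)
    (hmono : StrictMono ρ) (m : ℕ) :
    ContinuousAt (fun z => laplaceExponent σ μ a ρ ahat ρhat z - z ^ 2 * poleTerm a ρ m z)
      (ρ m) := by
  have hS := poleSeries.continuousAt_sub_poleTerm h hmono m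
  have hT := poleSeries.continuousAt_comp_neg hhat (h.pos m).le
  have hrest : (fun z => laplaceExponent σ μ a ρ ahat ρhat z - z ^ 2 * poleTerm a ρ m z) =
      fun z => σ ^ 2 * z ^ 2 / 2 + μ * z + z ^ 2 * (poleSeries a ρ z - poleTerm a ρ m z)
        + z ^ 2 * poleSeries ahat ρhat (-z) := by
    funext z
    unfold laplaceExponent
    ring
  rw [hrest]
  fun_prop

lemma tendsto_nhdsLT (h : AdmissiblePoles a ρ) (hhat : AdmissiblePoles ahat ρhat)
    (ha : ∀ k, 0 < a k) (hmono : StrictMono ρ) (m : ℕ) :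
    Tendsto (laplaceExponent σ μ a ρ ahat ρhat) (𝓝[<] ρ m) atTop := by
  have hpole : Tendsto (fun z => z ^ 2 * poleTerm a ρ m z) (𝓝[<] ρ m) atTop :=
    (((continuous_pow 2).tendsto _).mono_left nhdsWithin_le_nhds).pos_mul_atTop
      (pow_pos (h.pos m) 2) (tendsto_div_mul_sub_nhdsLT (ha m) (h.pos m))
  exact (hpole.atTop_add ((continuousAt_sub_pole h hhat hmono m).tendsto.mono_left
    nhdsWithin_le_nhds)).congr fun z => add_sub_cancel _ _

lemma tendsto_nhdsGT (h : AdmissiblePoles a ρ) (hhat : AdmissiblePoles ahat ρhat)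
    (ha : ∀ k, 0 < a k) (hmono : StrictMono ρ) (m : ℕ) :
    Tendsto (laplaceExponent σ μ a ρ ahat ρhat) (𝓝[>] ρ m) atBot := by
  have hpole : Tendsto (fun z => z ^ 2 * poleTerm a ρ m z) (𝓝[>] ρ m) atBot :=
    (((continuous_pow 2).tendsto _).mono_left nhdsWithin_le_nhds).pos_mul_atBot
      (pow_pos (h.pos m) 2) (tendsto_div_mul_sub_nhdsGT (ha m) (h.pos m))
  exact (hpole.atBot_add ((continuousAt_sub_pole h hhat hmono m).tendsto.mono_left
    nhdsWithin_le_nhds)).congr fun z => add_sub_cancel _ _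

lemma exists_mem_Ioo_zero_eq (h : AdmissiblePoles a ρ) (hhat : AdmissiblePoles ahat ρhat)
    (ha : ∀ k, 0 < a k) (hmono : StrictMono ρ) {q : ℝ} (hq : 0 < q) :
    ∃ z ∈ Ioo 0 (ρ 0), laplaceExponent σ μ a ρ ahat ρhat z = q := by
  have hcont : ContinuousOn (laplaceExponent σ μ a ρ ahat ρhat) (Ico 0 (ρ 0)) := by
    rintro z ⟨hz₀, hz⟩
    refine (continuousAt h hhat hz₀ ?_).continuousWithinAt
    rintro ⟨k, rfl⟩
    exact hz.not_ge (hmono.monotone k.zero_le)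
  obtain ⟨z, ⟨hz₀, hz⟩, hzq⟩ := isPreconnected_Ico.intermediate_value_Ici
    (left_mem_Ico.2 (h.pos 0)) (le_principal_iff.2 (Ico_mem_nhdsLT (h.pos 0))) hcont
    (tendsto_nhdsLT h hhat ha hmono 0) (show laplaceExponent σ μ a ρ ahat ρhat 0 ≤ q by
      rw [zero]; exact hq.le)
  refine ⟨z, ⟨hz₀.lt_of_ne ?_, hz⟩, hzq⟩
  rintro rfl
  rw [zero] at hzq
  exact hq.ne hzq

lemma exists_mem_Ioo_succ_eq (h : AdmissiblePoles a ρ) (hhat : AdmissiblePoles ahat ρhat)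
    (ha : ∀ k, 0 < a k) (hmono : StrictMono ρ) (q : ℝ) (n : ℕ) :
    ∃ z ∈ Ioo (ρ n) (ρ (n + 1)), laplaceExponent σ μ a ρ ahat ρhat z = q := by
  have hcont : ContinuousOn (laplaceExponent σ μ a ρ ahat ρhat) (Ioo (ρ n) (ρ (n + 1))) := by
    rintro z ⟨hnz, hzn⟩
    refine (continuousAt h hhat ((h.pos n).le.trans hnz.le) ?_).continuousWithinAt
    rintro ⟨k, rfl⟩
    have := hmono.lt_iff_lt.1 hnz
    have := hmono.lt_iff_lt.1 hzn
    omega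
  have hlt := hmono (Nat.lt_succ_self n)
  exact isPreconnected_Ioo.intermediate_value_Iii
    (le_principal_iff.2 (Ioo_mem_nhdsGT hlt)) (le_principal_iff.2 (Ioo_mem_nhdsLT hlt)) hcont
    (tendsto_nhdsGT h hhat ha hmono n) (tendsto_nhdsLT h hhat ha hmono (n + 1)) (mem_univ q)

lemma exists_interlacing_eq (h : AdmissiblePoles a ρ) (hhat : AdmissiblePoles ahat ρhat)
    (ha : ∀ k, 0 < a k) (hmono : StrictMono ρ) {q : ℝ} (hq : 0 < q) :
    ∃ ζ : ℕ → ℝ, (∀ n, laplaceExponent σ μ a ρ ahat ρhat (ζ n) = q) ∧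
      0 < ζ 0 ∧ (∀ n, ζ n < ρ n) ∧ (∀ n, ρ n < ζ (n + 1)) := by
  obtain ⟨z, ⟨hz₀, hz⟩, hzq⟩ := exists_mem_Ioo_zero_eq h hhat ha hmono hq
  choose ζ hζ hζq using exists_mem_Ioo_succ_eq h hhat ha hmono q
  refine ⟨fun n => Nat.casesOn n z ζ, fun n => ?_, hz₀, fun n => ?_, fun n => (hζ n).1⟩
  · cases n with
    | zero => exact hzq
    | succ n => exact hζq n
  · cases n with
    | zero => exact hz
    | succ n => exact (hζ n).2

end laplaceExponent

theorem stmt4_general (σ μ : ℝ)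
    (a ρ ahat ρhat : ℕ → ℝ)
    (ha : ∀ n, 0 < a n) (hρ : ∀ n, 0 < ρ n) (hahat : ∀ n, 0 < ahat n) (hρhat : ∀ n, 0 < ρhat n)
    (hmono : StrictMono ρ) (hmonohat : StrictMono ρhat)
    (hlim : Tendsto ρ atTop atTop) (hlimhat : Tendsto ρhat atTop atTop)
    (hsum : Summable (fun n => a n / (ρ n) ^ 2))
    (hsumhat : Summable (fun n => ahat n / (ρhat n) ^ 2))
    (φ : ℝ → ℝ)
    (hφ : ∀ z : ℝ, φ z = σ ^ 2 * z ^ 2 / 2 + μ * z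
        + z ^ 2 * ∑' n, a n / (ρ n * (ρ n - z))
        + z ^ 2 * ∑' n, ahat n / (ρhat n * (ρhat n + z)))
    (q : ℝ) (hq : 0 < q) :
    ∃ ζ ζhat : ℕ → ℝ,
      (∀ n, φ (ζ n) = q) ∧ (∀ n, φ (-(ζhat n)) = q) ∧
      0 < ζ 0 ∧ (∀ n, ζ n < ρ n) ∧ (∀ n, ρ n < ζ (n + 1)) ∧
      0 < ζhat 0 ∧ (∀ n, ζhat n < ρhat n) ∧ (∀ n, ρhat n < ζhat (n + 1)) := by
  have h : AdmissiblePoles a ρ := ⟨hρ, hlim, hsum⟩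
  have hhat : AdmissiblePoles ahat ρhat := ⟨hρhat, hlimhat, hsumhat⟩
  have hφL : φ = laplaceExponent σ μ a ρ ahat ρhat := by
    funext z
    simp only [hφ, laplaceExponent, poleSeries, poleTerm, sub_neg_eq_add]
  obtain ⟨ζ, hζq, hζ₀, hζlt, hζgt⟩ :=
    laplaceExponent.exists_interlacing_eq (σ := σ) (μ := μ) h hhat ha hmono hq
  obtain ⟨ζhat, hζhatq, hζhat₀, hζhatlt, hζhatgt⟩ :=
    laplaceExponent.exists_interlacing_eq (σ := σ) (μ := -μ) hhat h hahat hmonohat hq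
  refine ⟨ζ, ζhat, fun n => hφL ▸ hζq n, fun n => ?_,
    hζ₀, hζlt, hζgt, hζhat₀, hζhatlt, hζhatgt⟩
  rw [hφL, laplaceExponent.neg]
  exact hζhatq n

theorem stmt4 (σ μ : ℝ) (hσ : 0 ≤ σ)
    (a ρ ahat ρhat : ℕ → ℝ)
    (ha : ∀ n, 0 < a n) (hρ : ∀ n, 0 < ρ n) (hahat : ∀ n, 0 < ahat n) (hρhat : ∀ n, 0 < ρhat n)
    (hmono : StrictMono ρ) (hmonohat : StrictMono ρhat)
    (hlim : Tendsto ρ atTop atTop) (hlimhat : Tendsto ρhat atTop atTop)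
    (hsum : Summable (fun n => a n / (ρ n) ^ 2))
    (hsumhat : Summable (fun n => ahat n / (ρhat n) ^ 2))
    (φ : ℝ → ℝ)
    (hφ : ∀ z : ℝ, φ z = σ ^ 2 * z ^ 2 / 2 + μ * z
        + z ^ 2 * ∑' n, a n / (ρ n * (ρ n - z))
        + z ^ 2 * ∑' n, ahat n / (ρhat n * (ρhat n + z)))
    (q : ℝ) (hq : 0 < q) :
    ∃ ζ ζhat : ℕ → ℝ,
      (∀ n, φ (ζ n) = q) ∧ (∀ n, φ (-(ζhat n)) = q) ∧
      0 < ζ 0 ∧ (∀ n, ζ n < ρ n) ∧ (∀ n, ρ n < ζ (n + 1)) ∧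
      0 < ζhat 0 ∧ (∀ n, ζhat n < ρhat n) ∧ (∀ n, ρhat n < ζhat (n + 1)) :=
  stmt4_general σ μ a ρ ahat ρhat ha hρ hahat hρhat hmono hmonohat hlim hlimhat hsum hsumhat φ hφ q
    hq
end

section
/- Let $(\rho_n)$ and $(\zeta_n)$ be sequences of positive reals with $0 < \zeta_1 < \rho_1 < \zeta_2 < \rho_2 < \cdots$ and $\rho_n \to \infty$. Then for every complex $z$ with $\mathrm{Re}(z) > 0$, the infinite product $\prod_{n\ge1} \frac{1 + z/\rho_n}{1 + z/\zeta_n}$ converges. -/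
/-!
Write the `n`-th factor as `1 + wₙ` with `wₙ = z (1/ρₙ - 1/ζₙ) / (1 + z/ζₙ)`. Since `Re z > 0`, the
denominator has norm at least `1`, so `‖wₙ‖ ≤ ‖z‖ (1/ζₙ - 1/ρₙ)`. By interlacing,
`0 ≤ 1/ζₙ - 1/ρₙ ≤ 1/ζₙ - 1/ζₙ₊₁`, and the latter series telescopes, so `∑ wₙ` converges
absolutely and the product converges.
-/

theorem summable_sub_succ_of_antitone {a : ℕ → ℝ} {c : ℝ} (ha : Antitone a) (hc : ∀ n, c ≤ a n) :
    Summable fun n => a n - a (n + 1) := by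
  refine summable_of_sum_range_le (c := a 0 - c) (fun n => sub_nonneg.2 (ha n.le_succ)) fun n => ?_
  rw [Finset.sum_range_sub']
  linarith [hc n]

theorem summable_inv_sub_inv_of_interlacing {ζ ρ : ℕ → ℝ} (hζ : ∀ n, 0 < ζ n)
    (h1 : ∀ n, ζ n ≤ ρ n) (h2 : ∀ n, ρ n ≤ ζ (n + 1)) :
    Summable fun n => (ζ n)⁻¹ - (ρ n)⁻¹ := by
  have hanti : Antitone fun n => (ζ n)⁻¹ :=
    antitone_nat_of_succ_le fun n => inv_anti₀ (hζ n) ((h1 n).trans (h2 n))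
  refine (summable_sub_succ_of_antitone hanti fun n => (inv_pos.2 (hζ n)).le).of_nonneg_of_le
    (fun n => sub_nonneg.2 (inv_anti₀ (hζ n) (h1 n))) fun n => ?_
  linarith [inv_anti₀ ((hζ n).trans_le (h1 n)) (h2 n)]

namespace Complex

theorem one_le_norm_one_add_div_ofReal {z : ℂ} (hz : 0 ≤ z.re) {r : ℝ} (hr : 0 < r) :
    1 ≤ ‖1 + z / r‖ :=
  calc (1 : ℝ) ≤ (1 + z / r).re := by simpa using div_nonneg hz hr.le
    _ ≤ ‖1 + z / r‖ := re_le_norm _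

theorem norm_div_one_add_div_ofReal_sub_one_le {z : ℂ} (hz : 0 ≤ z.re) {a b : ℝ} (ha : 0 < a)
    (hab : a ≤ b) : ‖(1 + z / b) / (1 + z / a) - 1‖ ≤ ‖z‖ * (a⁻¹ - b⁻¹) := by
  have hden := one_le_norm_one_add_div_ofReal hz ha
  have hden0 : 1 + z / a ≠ 0 := norm_pos_iff.1 (one_pos.trans_le hden)
  have hdiff : 0 ≤ a⁻¹ - b⁻¹ := sub_nonneg.2 (inv_anti₀ ha hab)
  have hnum : ‖z / b - z / a‖ = ‖z‖ * (a⁻¹ - b⁻¹) := by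
    rw [show z / b - z / a = z * ((-(a⁻¹ - b⁻¹) : ℝ) : ℂ) by push_cast; ring, norm_mul,
      norm_real, norm_neg, Real.norm_of_nonneg hdiff]
  rw [div_sub_one hden0, add_sub_add_left_eq_sub, norm_div, hnum]
  exact div_le_self (mul_nonneg (norm_nonneg z) hdiff) hden

end Complex

open Filter Set

theorem stmt6_general (ρ ζ : ℕ → ℝ)
    (hζ0 : 0 < ζ 0) (h1 : ∀ n, ζ n < ρ n) (h2 : ∀ n, ρ n < ζ (n + 1)) :
    ∀ z : ℂ, 0 < z.re →
      Multipliable (fun n => (1 + z / (ρ n : ℂ)) / (1 + z / (ζ n : ℂ))) := by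
  intro z hz
  have hζ : ∀ n, 0 < ζ n := fun n => Nat.rec hζ0 (fun k ih => ih.trans ((h1 k).trans (h2 k))) n
  have hsum := summable_inv_sub_inv_of_interlacing hζ (fun n => (h1 n).le) fun n => (h2 n).le
  have hw : Summable fun n => (1 + z / ρ n) / (1 + z / ζ n) - 1 :=
    (hsum.mul_left ‖z‖).of_norm_bounded fun n =>
      Complex.norm_div_one_add_div_ofReal_sub_one_le hz.le (hζ n) (h1 n).le
  simpa using Complex.multipliable_one_add_of_summable hw

theorem stmt6 (ρ ζ : ℕ → ℝ)
    (hζ0 : 0 < ζ 0) (h1 : ∀ n, ζ n < ρ n) (h2 : ∀ n, ρ n < ζ (n + 1))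
    (hlim : Tendsto ρ atTop atTop) :
    ∀ z : ℂ, 0 < z.re →
      Multipliable (fun n => (1 + z / (ρ n : ℂ)) / (1 + z / (ζ n : ℂ))) :=
  stmt6_general ρ ζ hζ0 h1 h2
end
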